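/- arXiv:2101.01776 — 2 statements merged into one kernel-verified Lean document; each statement's English description precedes it below -/
import Mathlib

section
/- Let L be a real n×n matrix with ⟨Lx, x⟩ ≤ 0 for all x, η > 0, γ ≥ η, and β ∈ ℝ. Then the operator norm of P = [ηI - L + β²(ηI - L)⁻¹](γI - L)⁻¹ is bounded by 1 + β²/(γη). -/
open Matrix

/-- The continuous linear map on Euclidean space induced by a real matrix;
`‖toE A‖` is the operator 2-norm of `A`, and `inner` gives the Euclidean
inner product. -/
noncomputable def toE {n : ℕ} (A : Matrix (Fin n) (Fin n) ℝ) :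
    EuclideanSpace ℝ (Fin n) →L[ℝ] EuclideanSpace ℝ (Fin n) :=
  Matrix.toEuclideanCLM (𝕜 := ℝ) A

lemma toE_mul {n : ℕ} (A B : Matrix (Fin n) (Fin n) ℝ) :
    toE (A * B) = toE A * toE B := map_mul _ _ _

lemma toE_shift_apply {n : ℕ} (L : Matrix (Fin n) (Fin n) ℝ) (c : ℝ)
    (x : EuclideanSpace ℝ (Fin n)) :
    toE (c • (1 : Matrix (Fin n) (Fin n) ℝ) - L) x = c • x - toE L x := by
  simp only [toE, map_sub, _root_.map_smul, _root_.map_one, ContinuousLinearMap.sub_apply,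
    ContinuousLinearMap.smul_apply, ContinuousLinearMap.one_apply]

/-- Lower bound on the norm from coercivity. -/
lemma lower_bound {n : ℕ} (L : Matrix (Fin n) (Fin n) ℝ)
    (hL : ∀ x : EuclideanSpace ℝ (Fin n), inner ℝ (toE L x) x ≤ (0 : ℝ))
    (c : ℝ) (hc : 0 < c) (x : EuclideanSpace ℝ (Fin n)) :
    c * ‖x‖ ≤ ‖toE (c • (1 : Matrix (Fin n) (Fin n) ℝ) - L) x‖ := by
  rcases eq_or_ne x 0 with rfl | hx
  · simp
  have h1 : c * ‖x‖ ^ 2 ≤ inner ℝ (toE (c • (1 : Matrix (Fin n) (Fin n) ℝ) - L) x) x := by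
    rw [toE_shift_apply, inner_sub_left, real_inner_smul_left,
      real_inner_self_eq_norm_sq]
    nlinarith [hL x]
  have h2 : inner ℝ (toE (c • (1 : Matrix (Fin n) (Fin n) ℝ) - L) x) x ≤
      ‖toE (c • (1 : Matrix (Fin n) (Fin n) ℝ) - L) x‖ * ‖x‖ :=
    real_inner_le_norm _ _
  have hxn : (0 : ℝ) < ‖x‖ := norm_pos_iff.mpr hx
  nlinarith

lemma isUnit_shift {n : ℕ} (L : Matrix (Fin n) (Fin n) ℝ)
    (hL : ∀ x : EuclideanSpace ℝ (Fin n), inner ℝ (toE L x) x ≤ (0 : ℝ))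
    (c : ℝ) (hc : 0 < c) : IsUnit (c • (1 : Matrix (Fin n) (Fin n) ℝ) - L) := by
  set A := c • (1 : Matrix (Fin n) (Fin n) ℝ) - L
  rw [← Matrix.mulVec_injective_iff_isUnit]
  intro u v huv
  have h : toE A ((WithLp.equiv 2 _).symm u) = toE A ((WithLp.equiv 2 _).symm v) := by
    apply (WithLp.equiv 2 (Fin n → ℝ)).injective
    simpa [toE, Matrix.toLin'_apply] using huv
  have key : ∀ x : EuclideanSpace ℝ (Fin n), toE A x = 0 → x = 0 := by
    intro x hx
    have := lower_bound L hL c hc x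
    rw [hx, norm_zero] at this
    have : ‖x‖ ≤ 0 := by nlinarith
    simpa using le_antisymm this (norm_nonneg x)
  have : (WithLp.equiv 2 (Fin n → ℝ)).symm u = (WithLp.equiv 2 (Fin n → ℝ)).symm v := by
    have := key ((WithLp.equiv 2 _).symm u - (WithLp.equiv 2 _).symm v) (by
      rw [map_sub, h, sub_self])
    exact sub_eq_zero.mp this
  exact (WithLp.equiv 2 (Fin n → ℝ)).symm.injective this

set_option synthInstance.maxHeartbeats 1000000 in
theorem stmt_3 {n : ℕ} (L : Matrix (Fin n) (Fin n) ℝ)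
    (hL : ∀ x : EuclideanSpace ℝ (Fin n), inner ℝ (toE L x) x ≤ (0 : ℝ))
    (η γ β : ℝ) (hη : 0 < η) (hγ : η ≤ γ) :
    ‖toE ((η • (1 : Matrix (Fin n) (Fin n) ℝ) - L
        + β ^ 2 • (η • (1 : Matrix (Fin n) (Fin n) ℝ) - L)⁻¹)
        * (γ • (1 : Matrix (Fin n) (Fin n) ℝ) - L)⁻¹)‖ ≤ 1 + β ^ 2 / (γ * η) := by
  have hγ0 : 0 < γ := lt_of_lt_of_le hη hγ
  set A := η • (1 : Matrix (Fin n) (Fin n) ℝ) - L with hA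
  set B := γ • (1 : Matrix (Fin n) (Fin n) ℝ) - L with hB
  have hAu : IsUnit A := isUnit_shift L hL η hη
  have hBu : IsUnit B := isUnit_shift L hL γ hγ0
  have hAinv : A * A⁻¹ = 1 := Matrix.mul_nonsing_inv A (A.isUnit_iff_isUnit_det.mp hAu)
  have hBinv : B * B⁻¹ = 1 := Matrix.mul_nonsing_inv B (B.isUnit_iff_isUnit_det.mp hBu)
  -- lower bounds
  have hAlow : ∀ x, η * ‖x‖ ≤ ‖toE A x‖ := lower_bound L hL η hη
  have hBlow : ∀ x, γ * ‖x‖ ≤ ‖toE B x‖ := lower_bound L hL γ hγ0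
  -- ‖A x‖ ≤ ‖B x‖
  have hAB : ∀ x, ‖toE A x‖ ≤ ‖toE B x‖ := by
    intro x
    have hAx : toE A x = η • x - toE L x := toE_shift_apply L η x
    have hBx : toE B x = γ • x - toE L x := toE_shift_apply L γ x
    have hsq : ‖toE A x‖ ^ 2 ≤ ‖toE B x‖ ^ 2 := by
      rw [hAx, hBx, norm_sub_sq_real, norm_sub_sq_real, real_inner_smul_left,
        real_inner_smul_left, norm_smul, norm_smul]
      have ht : inner ℝ x (toE L x) ≤ (0 : ℝ) := by
        rw [real_inner_comm]; exact hL x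
      have h1 : ‖η‖ = η := abs_of_pos hη
      have h2 : ‖γ‖ = γ := abs_of_pos hγ0
      rw [h1, h2]
      nlinarith [norm_nonneg x, sq_nonneg ‖x‖,
        mul_nonneg (sub_nonneg.mpr hγ) (neg_nonneg.mpr ht),
        mul_nonneg (mul_nonneg (sub_nonneg.mpr hγ) (by linarith : (0:ℝ) ≤ γ + η))
          (sq_nonneg ‖x‖)]
    nlinarith [norm_nonneg (toE A x), norm_nonneg (toE B x)]
  -- consequences via matrix inverses
  have happly : ∀ (M : Matrix (Fin n) (Fin n) ℝ) (hM : M * M⁻¹ = 1)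
      (y : EuclideanSpace ℝ (Fin n)), toE M (toE M⁻¹ y) = y := by
    intro M hM y
    have : toE (M * M⁻¹) y = y := by
      rw [hM]; simp [toE]
    rwa [toE_mul, ContinuousLinearMap.mul_apply] at this
  have hAinvle : ‖toE A⁻¹‖ ≤ 1 / η := by
    apply ContinuousLinearMap.opNorm_le_bound _ (by positivity)
    intro y
    have h1 := hAlow (toE A⁻¹ y)
    rw [happly A hAinv y] at h1
    rw [div_mul_eq_mul_div, one_mul, le_div_iff₀ hη, mul_comm]
    exact h1
  have hBinvle : ‖toE B⁻¹‖ ≤ 1 / γ := by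
    apply ContinuousLinearMap.opNorm_le_bound _ (by positivity)
    intro y
    have h1 := hBlow (toE B⁻¹ y)
    rw [happly B hBinv y] at h1
    rw [div_mul_eq_mul_div, one_mul, le_div_iff₀ hγ0, mul_comm]
    exact h1
  have hABle : ‖toE (A * B⁻¹)‖ ≤ 1 := by
    apply ContinuousLinearMap.opNorm_le_bound _ zero_le_one
    intro y
    rw [toE_mul, ContinuousLinearMap.mul_apply, one_mul]
    calc ‖toE A (toE B⁻¹ y)‖ ≤ ‖toE B (toE B⁻¹ y)‖ := hAB _
      _ = ‖y‖ := by rw [happly B hBinv y]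
  have hsplit : (A + β ^ 2 • A⁻¹) * B⁻¹ = A * B⁻¹ + β ^ 2 • (A⁻¹ * B⁻¹) := by
    rw [add_mul, smul_mul_assoc]
  have htoE : toE ((A + β ^ 2 • A⁻¹) * B⁻¹)
      = toE (A * B⁻¹) + β ^ 2 • toE (A⁻¹ * B⁻¹) := by
    rw [hsplit]; simp only [toE, map_add, _root_.map_smul]
  rw [htoE]
  have h2 : ‖toE (A⁻¹ * B⁻¹)‖ ≤ 1 / η * (1 / γ) := by
    rw [toE_mul]
    calc ‖toE A⁻¹ * toE B⁻¹‖ ≤ ‖toE A⁻¹‖ * ‖toE B⁻¹‖ :=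
          ContinuousLinearMap.opNorm_comp_le _ _
      _ ≤ 1 / η * (1 / γ) := by
          apply mul_le_mul hAinvle hBinvle (norm_nonneg _) (by positivity)
  calc ‖toE (A * B⁻¹) + β ^ 2 • toE (A⁻¹ * B⁻¹)‖
      ≤ ‖toE (A * B⁻¹)‖ + ‖β ^ 2 • toE (A⁻¹ * B⁻¹)‖ := norm_add_le _ _
    _ ≤ ‖toE (A * B⁻¹)‖ + β ^ 2 * ‖toE (A⁻¹ * B⁻¹)‖ := by
        have hs := ContinuousLinearMap.opNorm_smul_le (β ^ 2) (toE (A⁻¹ * B⁻¹))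
        rw [Real.norm_eq_abs, abs_of_nonneg (sq_nonneg β)] at hs
        linarith
    _ ≤ 1 + β ^ 2 * (1 / η * (1 / γ)) := by
        have h3 := mul_le_mul_of_nonneg_left h2 (sq_nonneg β)
        linarith
    _ = 1 + β ^ 2 / (γ * η) := by field_simp
end

section
/- Let L₁, L₂ be real n×n matrices each with field of values in the closed left half-plane and satisfying ⟨L₁w, L₂w⟩ ≥ 0 for all w. Let η > 0, β ∈ ℝ, γ* = (η²+β²)/η, and P = [ηI - L₂ + β²(ηI - L₁)⁻¹](γ*I - L₂)⁻¹. Then the 2-norm condition number of P satisfies κ(P) ≤ 2 + β²/η². -/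
open Matrix

lemma toE_mul_apply {n : ℕ} (X Y : Matrix (Fin n) (Fin n) ℝ) (x : EuclideanSpace ℝ (Fin n)) :
    toE (X * Y) x = toE X (toE Y x) := by
  simp [toE, _root_.map_mul, ContinuousLinearMap.mul_apply]

lemma toE_one_apply {n : ℕ} (x : EuclideanSpace ℝ (Fin n)) : toE (1 : Matrix (Fin n) (Fin n) ℝ) x = x := by
  simp [toE, _root_.map_one]

lemma toE_add_apply {n : ℕ} (X Y : Matrix (Fin n) (Fin n) ℝ) (x : EuclideanSpace ℝ (Fin n)) :
    toE (X + Y) x = toE X x + toE Y x := by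
  simp [toE, map_add]

lemma toE_sub_apply {n : ℕ} (X Y : Matrix (Fin n) (Fin n) ℝ) (x : EuclideanSpace ℝ (Fin n)) :
    toE (X - Y) x = toE X x - toE Y x := by
  simp [toE, map_sub]

lemma toE_smul_apply {n : ℕ} (c : ℝ) (X : Matrix (Fin n) (Fin n) ℝ) (x : EuclideanSpace ℝ (Fin n)) :
    toE (c • X) x = c • toE X x := by
  simp [toE, _root_.map_smul]

lemma sqle {a b : ℝ} (ha : 0 ≤ a) (hb : 0 ≤ b) (h : a ^ 2 ≤ b ^ 2) : a ≤ b :=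
  (pow_le_pow_iff_left₀ ha hb two_ne_zero).mp h

lemma aux_unit {n : ℕ} (X : Matrix (Fin n) (Fin n) ℝ) {c : ℝ} (hc : 0 < c)
    (h : ∀ x : EuclideanSpace ℝ (Fin n), c * ‖x‖ ^ 2 ≤ inner ℝ (toE X x) x) :
    IsUnit X.det := by
  rw [isUnit_iff_ne_zero]
  intro hdet
  obtain ⟨v, hv, hv0⟩ := (Matrix.exists_mulVec_eq_zero_iff).2 hdet
  set x : EuclideanSpace ℝ (Fin n) := (WithLp.equiv 2 _).symm v with hx
  have hx0 : toE X x = 0 := by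
    simp [toE, hx, WithLp.equiv_symm_apply, Matrix.toEuclideanCLM_toLp, Matrix.toLin'_apply, hv0]
  have h1 := h x
  rw [hx0] at h1
  simp only [inner_zero_left] at h1
  have hxne : x ≠ 0 := by simpa [hx] using hv
  have hxx : (0:ℝ) < ‖x‖ ^ 2 := by have := norm_pos_iff.mpr hxne; positivity
  nlinarith

set_option maxHeartbeats 1000000 in
theorem stmt_5 {n : ℕ} (L₁ L₂ : Matrix (Fin n) (Fin n) ℝ)
    (hL₁ : ∀ x : EuclideanSpace ℝ (Fin n), inner ℝ (toE L₁ x) x ≤ (0 : ℝ))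
    (hL₂ : ∀ x : EuclideanSpace ℝ (Fin n), inner ℝ (toE L₂ x) x ≤ (0 : ℝ))
    (hL₁₂ : ∀ w : EuclideanSpace ℝ (Fin n), (0 : ℝ) ≤ inner ℝ (toE L₁ w) (toE L₂ w))
    (η β γs : ℝ) (hη : 0 < η) (hγs : γs = (η ^ 2 + β ^ 2) / η)
    (P : Matrix (Fin n) (Fin n) ℝ)
    (hP : P = (η • (1 : Matrix (Fin n) (Fin n) ℝ) - L₂
        + β ^ 2 • (η • (1 : Matrix (Fin n) (Fin n) ℝ) - L₁)⁻¹)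
        * (γs • (1 : Matrix (Fin n) (Fin n) ℝ) - L₂)⁻¹) :
    ‖toE P‖ * ‖toE P⁻¹‖ ≤ 2 + β ^ 2 / η ^ 2 := by
  have hηne : η ≠ 0 := hη.ne'
  set A : Matrix (Fin n) (Fin n) ℝ := η • 1 - L₁ with hA
  set B : Matrix (Fin n) (Fin n) ℝ := η • 1 - L₂ with hB
  set Q : Matrix (Fin n) (Fin n) ℝ := γs • 1 - L₂ with hQ
  set M : Matrix (Fin n) (Fin n) ℝ := B + β ^ 2 • A⁻¹ with hM
  have hγpos : 0 < γs := by rw [hγs]; positivity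
  have hA_apply : ∀ v : EuclideanSpace ℝ (Fin n), toE A v = η • v - toE L₁ v := by
    intro v; rw [hA, toE_sub_apply, toE_smul_apply, toE_one_apply]
  have hB_apply : ∀ v : EuclideanSpace ℝ (Fin n), toE B v = η • v - toE L₂ v := by
    intro v; rw [hB, toE_sub_apply, toE_smul_apply, toE_one_apply]
  have hQ_apply : ∀ v : EuclideanSpace ℝ (Fin n), toE Q v = γs • v - toE L₂ v := by
    intro v; rw [hQ, toE_sub_apply, toE_smul_apply, toE_one_apply]
  have hA_coer : ∀ v : EuclideanSpace ℝ (Fin n), η * ‖v‖ ^ 2 ≤ inner ℝ (toE A v) v := by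
    intro v
    rw [hA_apply v, inner_sub_left, real_inner_smul_left, real_inner_self_eq_norm_sq]
    have := hL₁ v; linarith
  have hB_coer : ∀ v : EuclideanSpace ℝ (Fin n), η * ‖v‖ ^ 2 ≤ inner ℝ (toE B v) v := by
    intro v
    rw [hB_apply v, inner_sub_left, real_inner_smul_left, real_inner_self_eq_norm_sq]
    have := hL₂ v; linarith
  have hQ_coer : ∀ v : EuclideanSpace ℝ (Fin n), γs * ‖v‖ ^ 2 ≤ inner ℝ (toE Q v) v := by
    intro v
    rw [hQ_apply v, inner_sub_left, real_inner_smul_left, real_inner_self_eq_norm_sq]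
    have := hL₂ v; linarith
  have hAdet : IsUnit A.det := aux_unit A hη hA_coer
  have hQdet : IsUnit Q.det := aux_unit Q hγpos hQ_coer
  have hAinv_nonneg : ∀ z : EuclideanSpace ℝ (Fin n), (0:ℝ) ≤ inner ℝ (toE A⁻¹ z) z := by
    intro z
    have hy : toE A (toE A⁻¹ z) = z := by
      rw [← toE_mul_apply, Matrix.mul_nonsing_inv A hAdet, toE_one_apply]
    set y := toE A⁻¹ z
    have h1 := hA_coer y
    rw [hy] at h1
    calc (0:ℝ) ≤ η * ‖y‖ ^ 2 := by positivity
    _ ≤ inner ℝ (z : EuclideanSpace ℝ (Fin n)) y := h1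
    _ = inner ℝ y z := real_inner_comm _ _
  have hM_apply : ∀ z : EuclideanSpace ℝ (Fin n), toE M z = toE B z + β ^ 2 • toE A⁻¹ z := by
    intro z; rw [hM, toE_add_apply, toE_smul_apply]
  have hM_coer : ∀ z : EuclideanSpace ℝ (Fin n), η * ‖z‖ ^ 2 ≤ inner ℝ (toE M z) z := by
    intro z
    rw [hM_apply z, inner_add_left, real_inner_smul_left]
    have h1 := hB_coer z
    have h2 := hAinv_nonneg z
    nlinarith [sq_nonneg β]
  have hMdet : IsUnit M.det := aux_unit M hη hM_coer
  have hPMQ : P = M * Q⁻¹ := hP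
  have hPinv : P⁻¹ = Q * M⁻¹ := by
    rw [hPMQ, Matrix.mul_inv_rev, Matrix.nonsing_inv_nonsing_inv Q hQdet]
  have key : ∀ v : EuclideanSpace ℝ (Fin n),
      ‖toE M (toE A v)‖ ≤ ‖toE Q (toE A v)‖ ∧
      ‖toE Q (toE A v)‖ ≤ (1 + β ^ 2 / η ^ 2) * ‖toE M (toE A v)‖ := by
    intro v
    set w := toE A v with hw
    set l := toE L₁ v with hl
    have hwvl : w = η • v - l := hA_apply v
    have hAinvw : toE A⁻¹ w = v := by
      rw [hw, ← toE_mul_apply, Matrix.nonsing_inv_mul A hAdet, toE_one_apply]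
    have hMw : toE M w = toE B w + β ^ 2 • v := by rw [hM_apply, hAinvw]
    have hQBw : toE Q w = toE B w + (β ^ 2 / η) • w := by
      rw [hQ_apply, hB_apply]
      have : γs • w = η • w + (β ^ 2 / η) • w := by
        rw [← add_smul]
        congr 1
        rw [hγs]; field_simp
      rw [this]; abel
    have hdiff : toE M w = toE Q w + (β ^ 2 / η) • l := by
      rw [hMw, hQBw, hwvl, smul_sub, smul_smul, div_mul_cancel₀ _ hηne]
      abel
    have hvl : inner ℝ (v : EuclideanSpace ℝ (Fin n)) l ≤ (0:ℝ) := by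
      rw [real_inner_comm]; exact hL₁ v
    have hQwl : inner ℝ (toE Q w) l ≤ -γs * ‖l‖ ^ 2 := by
      rw [hQ_apply, hwvl]
      have hL2w : toE L₂ (η • v - l) = η • toE L₂ v - toE L₂ l := by
        rw [map_sub, ContinuousLinearMap.map_smul]
      rw [inner_sub_left, hL2w, inner_sub_left, real_inner_smul_left, real_inner_smul_left,
        inner_sub_left, real_inner_smul_left, real_inner_self_eq_norm_sq]
      have h1 : (0:ℝ) ≤ inner ℝ (l : EuclideanSpace ℝ (Fin n)) (toE L₂ v) := by
        rw [hl]; exact hL₁₂ v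
      have h2 : inner ℝ (toE L₂ v) l = inner ℝ (l : EuclideanSpace ℝ (Fin n)) (toE L₂ v) :=
        real_inner_comm _ _
      have h3 := hL₂ l
      have e1 : γs * η * inner ℝ (v : EuclideanSpace ℝ (Fin n)) l ≤ 0 :=
        mul_nonpos_of_nonneg_of_nonpos (by positivity) hvl
      have e2 : (0:ℝ) ≤ η * inner ℝ (toE L₂ v) l := by
        rw [h2]; exact mul_nonneg hη.le h1
      nlinarith
    have hnorml : ‖l‖ ≤ ‖w‖ := by
      have hexp : ‖w‖ ^ 2 = ‖η • v‖ ^ 2 - 2 * inner ℝ (η • v) l + ‖l‖ ^ 2 := by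
        rw [hwvl, norm_sub_sq_real]
      rw [real_inner_smul_left, norm_smul, Real.norm_eq_abs, abs_of_pos hη] at hexp
      have e1 : η * inner ℝ (v : EuclideanSpace ℝ (Fin n)) l ≤ 0 :=
        mul_nonpos_of_nonneg_of_nonpos hη.le hvl
      refine sqle (norm_nonneg _) (norm_nonneg _) ?_
      nlinarith [sq_nonneg (η * ‖v‖)]
    have hMwlow : η * ‖w‖ ≤ ‖toE M w‖ := by
      have h1 := hM_coer w
      have h2 : inner ℝ (toE M w) w ≤ ‖toE M w‖ * ‖w‖ := real_inner_le_norm _ _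
      rcases eq_or_lt_of_le (norm_nonneg w) with h0 | h0
      · rw [← h0, mul_zero]; exact norm_nonneg _
      · nlinarith
    constructor
    · have hexp : ‖toE M w‖ ^ 2 = ‖toE Q w‖ ^ 2
          + 2 * ((β ^ 2 / η) * inner ℝ (toE Q w) l) + (β ^ 2 / η) ^ 2 * ‖l‖ ^ 2 := by
        rw [hdiff, norm_add_sq_real, real_inner_smul_right, norm_smul, Real.norm_eq_abs,
          mul_pow, sq_abs]
      have hc : (0:ℝ) ≤ β ^ 2 / η := by positivity
      have hcle : (β ^ 2 / η) ^ 2 ≤ 2 * (β ^ 2 / η) * γs := by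
        have hg : γs = η + β ^ 2 / η := by rw [hγs]; field_simp
        nlinarith
      have e1 : (β ^ 2 / η) * inner ℝ (toE Q w) l ≤ (β ^ 2 / η) * (-γs * ‖l‖ ^ 2) :=
        mul_le_mul_of_nonneg_left hQwl hc
      have e2 : (β ^ 2 / η) ^ 2 * ‖l‖ ^ 2 ≤ 2 * (β ^ 2 / η) * γs * ‖l‖ ^ 2 :=
        mul_le_mul_of_nonneg_right hcle (sq_nonneg _)
      refine sqle (norm_nonneg _) (norm_nonneg _) ?_
      nlinarith
    · have h1 : ‖toE Q w‖ ≤ ‖toE M w‖ + (β ^ 2 / η) * ‖l‖ := by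
        have hh : toE Q w = toE M w - (β ^ 2 / η) • l := by rw [hdiff]; abel
        rw [hh]
        calc ‖toE M w - (β ^ 2 / η) • l‖ ≤ ‖toE M w‖ + ‖(β ^ 2 / η) • l‖ := norm_sub_le _ _
        _ = ‖toE M w‖ + (β ^ 2 / η) * ‖l‖ := by
            rw [norm_smul, Real.norm_eq_abs, abs_of_nonneg (by positivity)]
      have h2 : η * ‖l‖ ≤ ‖toE M w‖ :=
        le_trans (mul_le_mul_of_nonneg_left hnorml hη.le) hMwlow
      have hfrac : (0:ℝ) ≤ β ^ 2 / η ^ 2 := by positivity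
      have e3 : (β ^ 2 / η ^ 2) * (η * ‖l‖) ≤ (β ^ 2 / η ^ 2) * ‖toE M w‖ :=
        mul_le_mul_of_nonneg_left h2 hfrac
      have e4 : (β ^ 2 / η) * ‖l‖ = (β ^ 2 / η ^ 2) * (η * ‖l‖) := by
        field_simp
      rw [add_mul, one_mul]
      linarith
  have hPle : ‖toE P‖ ≤ 1 := by
    apply ContinuousLinearMap.opNorm_le_bound _ zero_le_one
    intro x
    set v := toE (A⁻¹ * Q⁻¹) x with hv
    have hAv : toE A v = toE Q⁻¹ x := by
      rw [hv, ← toE_mul_apply, ← mul_assoc, Matrix.mul_nonsing_inv A hAdet, one_mul]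
    have h1 : toE P x = toE M (toE A v) := by
      rw [hAv, ← toE_mul_apply, ← hPMQ]
    have h2 : toE Q (toE A v) = x := by
      rw [hAv, ← toE_mul_apply, Matrix.mul_nonsing_inv Q hQdet, toE_one_apply]
    rw [h1, one_mul]
    calc ‖toE M (toE A v)‖ ≤ ‖toE Q (toE A v)‖ := (key v).1
    _ = ‖x‖ := by rw [h2]
  have hPinvle : ‖toE P⁻¹‖ ≤ 1 + β ^ 2 / η ^ 2 := by
    apply ContinuousLinearMap.opNorm_le_bound _ (by positivity)
    intro y
    set v := toE (A⁻¹ * M⁻¹) y with hv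
    have hAv : toE A v = toE M⁻¹ y := by
      rw [hv, ← toE_mul_apply, ← mul_assoc, Matrix.mul_nonsing_inv A hAdet, one_mul]
    have h1 : toE P⁻¹ y = toE Q (toE A v) := by
      rw [hAv, ← toE_mul_apply, ← hPinv]
    have h2 : toE M (toE A v) = y := by
      rw [hAv, ← toE_mul_apply, Matrix.mul_nonsing_inv M hMdet, toE_one_apply]
    rw [h1]
    calc ‖toE Q (toE A v)‖ ≤ (1 + β ^ 2 / η ^ 2) * ‖toE M (toE A v)‖ := (key v).2
    _ = (1 + β ^ 2 / η ^ 2) * ‖y‖ := by rw [h2]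
  have hfrac : (0:ℝ) ≤ β ^ 2 / η ^ 2 := by positivity
  calc ‖toE P‖ * ‖toE P⁻¹‖ ≤ 1 * (1 + β ^ 2 / η ^ 2) :=
      mul_le_mul hPle hPinvle (norm_nonneg _) zero_le_one
  _ ≤ 2 + β ^ 2 / η ^ 2 := by linarith
end
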